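/- arXiv:2311.06840 — 8 statements merged into one kernel-verified Lean document; each statement's English description precedes it below -/
import Mathlib

section
/- Let n ≥ 2. For a function f defined on ordered pairs (i, j) of distinct elements of Fin n with values in ℝ, the following are equivalent: (a) f is an expert-graph edge-weight function, i.e. there exist a nonempty finite type U, a probability distribution d on U, and for each u ∈ U a positive probability vector p_u on Fin n such that f(i,j) = Σ_{u ∈ U} d(u) · p_u(i)/(p_u(i) + p_u(j)) for all i ≠ j; (b) there exists a function w from the permutations of Fin n to ℝ with w(σ) > 0 for every permutation σ and Σ_σ w(σ) = 1, such that f(i,j) = Σ_σ w(σ) · [σ⁻¹(i) < σ⁻¹(j)] for all i ≠ j (where [·] is the 0/1 indicator). -/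
/-!
(a) ⇒ (b): under the Plackett–Luce model with scores `p`, a ranking is built by drawing the top
item with probability proportional to its score and ranking the rest recursively. Every ranking
gets positive probability, and `i` precedes `j` with probability `p i / (p i + p j)`, so mixing
these distributions over the states gives the weights.

(b) ⇒ (a): for the geometric scores `t ^ (position in σ)` the Plackett–Luce distribution tends to
the point mass at `σ` as `t → 0⁺`. Hence the matrix of these distributions, indexed by `σ`,
tends to the identity; for small `t` the preimage of the given strictly positive weights is still
strictly positive, and it mixes the normalised geometric scores into an expert graph.
-/

open Equiv Equiv.Perm Finset Filter Topology Matrix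

/-- `swapSucc a` enumerates the elements of `Fin (n + 1)` other than `a`, in the way
`decomposeFin.symm (a, τ)` places them after `a`. -/
def Fin.swapSucc {n : ℕ} (a : Fin (n + 1)) (k : Fin n) : Fin (n + 1) := swap 0 a k.succ

lemma Fin.exists_swapSucc_eq {n : ℕ} (a : Fin (n + 1)) {x : Fin (n + 1)} (hx : x ≠ a) :
    ∃ k, Fin.swapSucc a k = x :=
  ⟨(swap 0 a x).pred (by simpa [swap_apply_eq_iff] using hx), by simp [Fin.swapSucc]⟩

namespace Equiv.Perm

lemma sum_fin_succ {M : Type*} [AddCommMonoid M] {n : ℕ} (F : Perm (Fin (n + 1)) → M) :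
    ∑ σ, F σ = ∑ a, ∑ τ, F (decomposeFin.symm (a, τ)) := by
  rw [← decomposeFin.symm.sum_comp, Fintype.sum_prod_type]

lemma decomposeFin_symm_inv_apply_fst {n : ℕ} (a : Fin (n + 1)) (τ : Perm (Fin n)) :
    (decomposeFin.symm (a, τ))⁻¹ a = 0 := by
  rw [inv_eq_iff_eq, eq_comm, decomposeFin_symm_apply_zero]

lemma decomposeFin_symm_inv_apply_swapSucc {n : ℕ} (a : Fin (n + 1)) (τ : Perm (Fin n))
    (k : Fin n) : (decomposeFin.symm (a, τ))⁻¹ (Fin.swapSucc a k) = (τ⁻¹ k).succ := by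
  rw [inv_eq_iff_eq, eq_comm, decomposeFin_symm_apply_succ]
  simp [Fin.swapSucc]

end Equiv.Perm

/-- `decomposeFin σ = (σ 0, τ)`, where `τ` ranks the remaining items. -/
noncomputable def plackettLuce : ∀ {n : ℕ}, (Fin n → ℝ) → Perm (Fin n) → ℝ
  | 0, _, _ => 1
  | _ + 1, p, σ =>
      (p (σ 0) / ∑ i, p i) * plackettLuce (p ∘ Fin.swapSucc (σ 0)) (decomposeFin σ).2

def rankingIndicator {n : ℕ} (σ : Perm (Fin n)) (i j : Fin n) : ℝ :=
  if σ⁻¹ i < σ⁻¹ j then 1 else 0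

section decomposeFin

variable {n : ℕ} (a : Fin (n + 1)) (τ : Perm (Fin n))

lemma plackettLuce_decomposeFin_symm (p : Fin (n + 1) → ℝ) :
    plackettLuce p (decomposeFin.symm (a, τ)) =
      (p a / ∑ i, p i) * plackettLuce (p ∘ Fin.swapSucc a) τ := by
  rw [plackettLuce, decomposeFin_symm_apply_zero, apply_symm_apply]

lemma rankingIndicator_decomposeFin_symm_fst_left {j : Fin (n + 1)} (hj : j ≠ a) :
    rankingIndicator (decomposeFin.symm (a, τ)) a j = 1 := by
  obtain ⟨k, rfl⟩ := Fin.exists_swapSucc_eq a hj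
  simp [rankingIndicator, decomposeFin_symm_inv_apply_fst, decomposeFin_symm_inv_apply_swapSucc,
    Fin.succ_pos]

lemma rankingIndicator_decomposeFin_symm_fst_right (i : Fin (n + 1)) :
    rankingIndicator (decomposeFin.symm (a, τ)) i a = 0 := by
  simp [rankingIndicator, decomposeFin_symm_inv_apply_fst]

lemma rankingIndicator_decomposeFin_symm_swapSucc (k l : Fin n) :
    rankingIndicator (decomposeFin.symm (a, τ)) (Fin.swapSucc a k) (Fin.swapSucc a l) =
      rankingIndicator τ k l := by
  simp [rankingIndicator, decomposeFin_symm_inv_apply_swapSucc]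

end decomposeFin

lemma sum_pos_of_forall_pos {n : ℕ} [NeZero n] {p : Fin n → ℝ} (hp : ∀ i, 0 < p i) :
    0 < ∑ i, p i :=
  Finset.sum_pos (fun i _ => hp i) univ_nonempty

lemma plackettLuce_pos : ∀ {n : ℕ} {p : Fin n → ℝ}, (∀ i, 0 < p i) → ∀ σ, 0 < plackettLuce p σ
  | 0, _, _, _ => one_pos
  | _ + 1, p, hp, _ => by
    rw [plackettLuce]
    exact mul_pos (div_pos (hp _) (sum_pos_of_forall_pos hp)) (plackettLuce_pos (fun _ => hp _) _)

lemma sum_plackettLuce : ∀ {n : ℕ} {p : Fin n → ℝ}, (∀ i, 0 < p i) → ∑ σ, plackettLuce p σ = 1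
  | 0, _, _ => by simp [plackettLuce]
  | _ + 1, p, hp => by
    rw [sum_fin_succ]
    have h a : ∑ τ, plackettLuce (p ∘ Fin.swapSucc a) τ = 1 := sum_plackettLuce fun _ => hp _
    simp_rw [plackettLuce_decomposeFin_symm, ← mul_sum, h, mul_one, ← sum_div]
    exact div_self (sum_pos_of_forall_pos hp).ne'

lemma plackettLuce_const_mul : ∀ {n : ℕ} {c : ℝ}, c ≠ 0 → ∀ (p : Fin n → ℝ) σ,
    plackettLuce (fun i => c * p i) σ = plackettLuce p σ
  | 0, _, _, _, _ => rfl
  | _ + 1, c, hc, p, σ => by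
    rw [plackettLuce, plackettLuce, ← mul_sum, mul_div_mul_left _ _ hc]
    exact congrArg _ (plackettLuce_const_mul hc _ _)

lemma sum_plackettLuce_mul_rankingIndicator : ∀ {n : ℕ} {p : Fin n → ℝ}, (∀ i, 0 < p i) →
    ∀ {i j : Fin n}, i ≠ j → ∑ σ, plackettLuce p σ * rankingIndicator σ i j = p i / (p i + p j)
  | 0, _, _, i, _, _ => i.elim0
  | n + 1, p, hp, i, j, hij => by
    set r := p i / (p i + p j) with hr
    have hP : 0 < ∑ k, p k := sum_pos_of_forall_pos hp
    have hpij : 0 < p i + p j := add_pos (hp i) (hp j)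
    have given_first a : ∑ τ, plackettLuce p (decomposeFin.symm (a, τ)) *
        rankingIndicator (decomposeFin.symm (a, τ)) i j =
        p a / (∑ k, p k) * (if a = i then 1 else if a = j then 0 else r) := by
      simp_rw [plackettLuce_decomposeFin_symm, mul_assoc, ← mul_sum]
      congr 1
      split_ifs with hai haj
      · subst hai
        simp_rw [rankingIndicator_decomposeFin_symm_fst_left _ _ hij.symm, mul_one]
        exact sum_plackettLuce fun _ => hp _
      · subst haj
        simp [rankingIndicator_decomposeFin_symm_fst_right]
      · obtain ⟨k, rfl⟩ := Fin.exists_swapSucc_eq a (Ne.symm hai)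
        obtain ⟨l, rfl⟩ := Fin.exists_swapSucc_eq a (Ne.symm haj)
        simp_rw [rankingIndicator_decomposeFin_symm_swapSucc]
        exact sum_plackettLuce_mul_rankingIndicator (fun _ => hp _) fun h => hij (congrArg _ h)
    -- the excess at `i` and the deficit at `j` relative to `r` cancel
    set c := p i * p j / ((p i + p j) * ∑ k, p k) with hc
    have excess a : p a / (∑ k, p k) * (if a = i then 1 else if a = j then 0 else r) =
        r * (p a / ∑ k, p k) + (if a = i then c else 0) - (if a = j then c else 0) := by
      rcases eq_or_ne a i with rfl | hai
      · rw [if_pos rfl, if_pos rfl, if_neg hij, hr, hc]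
        field_simp
        ring
      rcases eq_or_ne a j with rfl | haj
      · rw [if_neg hai, if_pos rfl, if_neg hai, if_pos rfl, hr, hc]
        field_simp
        ring
      · rw [if_neg hai, if_neg haj, if_neg hai, if_neg haj]
        ring
    rw [sum_fin_succ]
    simp only [given_first, excess, sum_sub_distrib, sum_add_distrib, sum_ite_eq', mem_univ,
      if_true, ← mul_sum, ← sum_div, div_self hP.ne', mul_one, add_sub_cancel_right]

noncomputable def geometricScore {n : ℕ} (σ : Perm (Fin n)) (t : ℝ) (i : Fin n) : ℝ :=
  t ^ (σ⁻¹ i : ℕ)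

lemma geometricScore_pos {n : ℕ} (σ : Perm (Fin n)) {t : ℝ} (ht : 0 < t) (i : Fin n) :
    0 < geometricScore σ t i :=
  pow_pos ht _

lemma sum_geometricScore {n : ℕ} (σ : Perm (Fin n)) (t : ℝ) :
    ∑ i, geometricScore σ t i = ∑ k ∈ range n, t ^ k := by
  rw [← Fin.sum_univ_eq_sum_range, ← Equiv.sum_comp σ]
  simp [geometricScore]

lemma plackettLuce_geometricScore_decomposeFin_symm {n : ℕ} (a : Fin (n + 1))
    (τ : Perm (Fin n)) {t : ℝ} (ht : t ≠ 0) :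
    plackettLuce (geometricScore (decomposeFin.symm (a, τ)) t) (decomposeFin.symm (a, τ)) =
      (∑ k ∈ range (n + 1), t ^ k)⁻¹ * plackettLuce (geometricScore τ t) τ := by
  have hcomp : geometricScore (decomposeFin.symm (a, τ)) t ∘ Fin.swapSucc a =
      fun k => t * geometricScore τ t k := by
    ext k
    simp [geometricScore, decomposeFin_symm_inv_apply_swapSucc, pow_succ, mul_comm]
  rw [plackettLuce_decomposeFin_symm, hcomp, plackettLuce_const_mul ht, sum_geometricScore,
    geometricScore, decomposeFin_symm_inv_apply_fst, Fin.val_zero, pow_zero, one_div]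

lemma tendsto_plackettLuce_geometricScore_self :
    ∀ {n : ℕ} (σ : Perm (Fin n)),
      Tendsto (fun t => plackettLuce (geometricScore σ t) σ) (𝓝[>] 0) (𝓝 1)
  | 0, _ => tendsto_const_nhds
  | n + 1, σ => by
    obtain ⟨⟨a, τ⟩, rfl⟩ := decomposeFin.symm.surjective σ
    have hsum : Tendsto (fun t : ℝ => ∑ k ∈ range (n + 1), t ^ k) (𝓝[>] 0) (𝓝 1) := by
      have hcont : Continuous fun t : ℝ => ∑ k ∈ range (n + 1), t ^ k := by fun_prop
      simpa [sum_range_succ'] using (hcont.tendsto 0).mono_left nhdsWithin_le_nhds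
    have hlim := (hsum.inv₀ one_ne_zero).mul (tendsto_plackettLuce_geometricScore_self τ)
    rw [inv_one, one_mul] at hlim
    refine hlim.congr' ?_
    filter_upwards [self_mem_nhdsWithin] with t ht
    exact (plackettLuce_geometricScore_decomposeFin_symm a τ (ne_of_gt ht)).symm

lemma tendsto_pi_single_one_of_tendsto_apply {α ι : Type*} [Fintype ι] [DecidableEq ι]
    {l : Filter α} {v : α → ι → ℝ} {i₀ : ι}
    (hv : ∀ᶠ x in l, (∀ i, 0 ≤ v x i) ∧ ∑ i, v x i = 1)
    (hi₀ : Tendsto (fun x => v x i₀) l (𝓝 1)) : Tendsto v l (𝓝 (Pi.single i₀ 1)) := by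
  refine tendsto_pi_nhds.2 fun i => ?_
  rcases eq_or_ne i i₀ with rfl | hi
  · simpa using hi₀
  rw [Pi.single_eq_of_ne hi]
  have hrest : Tendsto (fun x => 1 - v x i₀) l (𝓝 0) := by
    simpa using (tendsto_const_nhds (x := (1 : ℝ))).sub hi₀
  refine tendsto_of_tendsto_of_tendsto_of_le_of_le' tendsto_const_nhds hrest ?_ ?_
  · filter_upwards [hv] with x hx using hx.1 i
  · filter_upwards [hv] with x ⟨hnonneg, hsum⟩
    have : v x i + v x i₀ ≤ ∑ k, v x k := by
      rw [← sum_pair hi]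
      exact sum_le_sum_of_subset_of_nonneg (subset_univ _) fun k _ _ => hnonneg k
    linarith

lemma eventually_exists_pos_vecMul_eq {α ι : Type*} [Fintype ι] [DecidableEq ι]
    {l : Filter α} {A : α → Matrix ι ι ℝ} (hA : Tendsto A l (𝓝 1)) {w : ι → ℝ}
    (hw : ∀ i, 0 < w i) : ∀ᶠ x in l, ∃ v : ι → ℝ, (∀ i, 0 < v i) ∧ v ᵥ* A x = w := by
  have hinv : Tendsto (fun x => (A x)⁻¹) l (𝓝 1) := by
    have hcont : ContinuousAt Inv.inv (1 : Matrix ι ι ℝ) := by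
      refine continuousAt_matrix_inv _ ?_
      rw [Ring.inverse_eq_inv', det_one]
      exact continuousAt_inv₀ one_ne_zero
    simpa only [inv_one, Function.comp_def] using hcont.tendsto.comp hA
  have hv : Tendsto (fun x => w ᵥ* (A x)⁻¹) l (𝓝 w) := by
    have hcont : Continuous fun M : Matrix ι ι ℝ => w ᵥ* M :=
      continuous_const.matrix_vecMul continuous_id
    simpa only [vecMul_one, Function.comp_def] using (hcont.tendsto 1).comp hinv
  have hdet : ∀ᶠ x in l, (A x).det ≠ 0 := by
    have : Tendsto (fun x => (A x).det) l (𝓝 1) := by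
      simpa only [id, det_one, Function.comp_def] using (continuous_id.matrix_det.tendsto 1).comp hA
    exact this.eventually_ne one_ne_zero
  have hpos : ∀ᶠ x in l, ∀ i, 0 < (w ᵥ* (A x)⁻¹) i :=
    eventually_all.2 fun i => ((continuous_apply i).tendsto w |>.comp hv).eventually
      (eventually_gt_nhds (hw i))
  filter_upwards [hdet, hpos] with x hx hxpos
  refine ⟨_, hxpos, ?_⟩
  rw [vecMul_vecMul, nonsing_inv_mul _ (isUnit_iff_ne_zero.2 hx), vecMul_one]

lemma tendsto_plackettLuce_geometricScore_matrix (n : ℕ) :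
    Tendsto (fun t => Matrix.of fun σ τ : Perm (Fin n) => plackettLuce (geometricScore σ t) τ)
      (𝓝[>] 0) (𝓝 1) := by
  refine tendsto_pi_nhds.2 fun σ => ?_
  have hone : (1 : Matrix (Perm (Fin n)) (Perm (Fin n)) ℝ) σ = Pi.single σ 1 :=
    funext fun _ => one_eq_pi_single
  rw [hone]
  refine tendsto_pi_single_one_of_tendsto_apply ?_ (tendsto_plackettLuce_geometricScore_self σ)
  filter_upwards [self_mem_nhdsWithin] with t ht
  have hq := geometricScore_pos σ ht
  exact ⟨fun τ => (plackettLuce_pos hq τ).le, sum_plackettLuce hq⟩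

lemma exists_ranking_mixture_of_expert_mixture {n : ℕ} {U : Type*} [Fintype U] {d : U → ℝ}
    {p : U → Fin n → ℝ} (hd : ∀ u, 0 ≤ d u) (hd1 : ∑ u, d u = 1) (hp : ∀ u i, 0 < p u i) :
    ∃ w : Perm (Fin n) → ℝ, (∀ σ, 0 < w σ) ∧ ∑ σ, w σ = 1 ∧ ∀ i j, i ≠ j →
      ∑ u, d u * (p u i / (p u i + p u j)) = ∑ σ, w σ * rankingIndicator σ i j := by
  obtain ⟨u₀, -, hu₀⟩ := exists_lt_of_sum_lt (s := univ) (f := 0) (g := d) (by simp [hd1])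
  refine ⟨fun σ => ∑ u, d u * plackettLuce (p u) σ, fun σ => ?_, ?_, fun i j hij => ?_⟩
  · exact sum_pos' (fun u _ => mul_nonneg (hd u) (plackettLuce_pos (hp u) σ).le)
      ⟨u₀, mem_univ _, mul_pos hu₀ (plackettLuce_pos (hp u₀) σ)⟩
  · rw [sum_comm]
    simp_rw [← mul_sum, sum_plackettLuce (hp _), mul_one, hd1]
  · simp_rw [sum_mul, mul_assoc]
    rw [sum_comm]
    simp_rw [← mul_sum, sum_plackettLuce_mul_rankingIndicator (hp _) hij]

lemma exists_expert_mixture_of_ranking_mixture {n : ℕ} [NeZero n] {w : Perm (Fin n) → ℝ}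
    (hw : ∀ σ, 0 < w σ) (hw1 : ∑ σ, w σ = 1) :
    ∃ (d : Perm (Fin n) → ℝ) (p : Perm (Fin n) → Fin n → ℝ),
      (∀ σ, 0 < d σ) ∧ ∑ σ, d σ = 1 ∧ (∀ σ i, 0 < p σ i) ∧ (∀ σ, ∑ i, p σ i = 1) ∧
      ∀ i j, i ≠ j →
        ∑ σ, w σ * rankingIndicator σ i j = ∑ σ, d σ * (p σ i / (p σ i + p σ j)) := by
  obtain ⟨t, ⟨d, hd, hdw⟩, ht⟩ :=
    ((eventually_exists_pos_vecMul_eq (tendsto_plackettLuce_geometricScore_matrix n) hw).and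
      self_mem_nhdsWithin).exists
  set A := Matrix.of fun σ τ : Perm (Fin n) => plackettLuce (geometricScore σ t) τ
  have hq (σ : Perm (Fin n)) := geometricScore_pos σ ht
  have hS σ : 0 < ∑ i, geometricScore σ t i := sum_pos_of_forall_pos (hq σ)
  refine ⟨d, fun σ i => geometricScore σ t i / ∑ k, geometricScore σ t k, hd, ?_,
    fun σ i => div_pos (hq σ i) (hS σ), fun σ => by rw [← sum_div, div_self (hS σ).ne'],
    fun i j hij => ?_⟩
  · have hrow : A *ᵥ 1 = 1 :=
      funext fun σ => by simp [A, mulVec, dotProduct, sum_plackettLuce (hq σ)]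
    rw [← hw1, ← dotProduct_one, ← dotProduct_one, ← hdw, ← dotProduct_mulVec, hrow]
  · have hrow : A *ᵥ (fun τ => rankingIndicator τ i j) =
        fun σ => geometricScore σ t i / (geometricScore σ t i + geometricScore σ t j) :=
      funext fun σ => sum_plackettLuce_mul_rankingIndicator (hq σ) hij
    change w ⬝ᵥ _ = _
    rw [← hdw, ← dotProduct_mulVec, hrow]
    refine sum_congr rfl fun σ _ => ?_
    rw [← add_div, div_div_div_cancel_right₀ (hS σ).ne']

/-- **Theorem 1 (Expert graphs = interior of the linear ordering polytope).**
For `n ≥ 2` and `f` on ordered pairs of distinct elements of `Fin n`, `f` arises as the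
edge-weight function of an expert graph (a mixture over a nonempty finite set of states of
pairwise opinions of positive probability vectors) if and only if `f` arises as a strictly
positive convex combination of ranking indicators. -/
theorem expert_graphs_eq_interior_linear_ordering_polytope
    (n : ℕ) (hn : 2 ≤ n) (f : Fin n → Fin n → ℝ) :
    (∃ (U : Type) (_ : Fintype U), Nonempty U ∧
      ∃ (d : U → ℝ) (p : U → Fin n → ℝ),
        (∀ u, 0 ≤ d u) ∧ (∑ u, d u = 1) ∧
        (∀ u i, 0 < p u i) ∧ (∀ u, ∑ i, p u i = 1) ∧
        (∀ i j : Fin n, i ≠ j →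
          f i j = ∑ u, d u * (p u i / (p u i + p u j)))) ↔
    (∃ w : Equiv.Perm (Fin n) → ℝ,
      (∀ σ, 0 < w σ) ∧ (∑ σ, w σ = 1) ∧
      (∀ i j : Fin n, i ≠ j →
        f i j = ∑ σ, w σ * (if σ⁻¹ i < σ⁻¹ j then (1 : ℝ) else 0))) := by
  constructor
  · rintro ⟨U, _, -, d, p, hd, hd1, hp, -, hf⟩
    obtain ⟨w, hw, hw1, hfw⟩ := exists_ranking_mixture_of_expert_mixture hd hd1 hp
    exact ⟨w, hw, hw1, fun i j hij => (hf i j hij).trans (hfw i j hij)⟩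
  · rintro ⟨w, hw, hw1, hf⟩
    have : NeZero n := ⟨by omega⟩
    obtain ⟨d, p, hd, hd1, hp, hp1, hwd⟩ := exists_expert_mixture_of_ranking_mixture hw hw1
    exact ⟨Perm (Fin n), inferInstance, ⟨1⟩, d, p, fun σ => (hd σ).le, hd1, hp, hp1,
      fun i j hij => (hf i j hij).trans (hwd i j hij)⟩
end

section
/- Let n ≥ 1, let σ be a permutation of Fin n, and let ε > 0. Then there exists a positive probability vector p on Fin n such that Σ_{(i,j), i ≠ j} (f_σ(i,j) − f_p(i,j))² < ε, where the sum ranges over all ordered pairs of distinct elements of Fin n. -/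
/-!
Weight the `k`-th ranked element by `δ ^ k` for a small `δ ∈ (0, 1]`. If `i` is ranked before `j`
then `δ ^ rank j ≤ δ * δ ^ rank i`, so the opinion `p i / (p i + p j)` is within `δ` of the ranking
indicator; the `n (n - 1)` squared errors thus sum to at most `n ^ 2 δ ^ 2`, which is `< ε` for
small `δ`. Normalising the weights to a probability vector does not change any opinion.
-/

open Finset Filter Topology

lemma pow_div_pow_add_pow_le {δ : ℝ} (hδ0 : 0 < δ) (hδ1 : δ ≤ 1) {a b : ℕ} (hab : a < b) :
    δ ^ b / (δ ^ a + δ ^ b) ≤ δ := by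
  rw [div_le_iff₀ (by positivity)]
  calc δ ^ b ≤ δ ^ (a + 1) := pow_le_pow_of_le_one hδ0.le hδ1 hab
    _ = δ * δ ^ a := pow_succ' δ a
    _ ≤ δ * (δ ^ a + δ ^ b) := by gcongr; exact le_add_of_nonneg_right (by positivity)

lemma sq_ite_lt_sub_pow_div_le {δ : ℝ} (hδ0 : 0 < δ) (hδ1 : δ ≤ 1) {a b : ℕ} (hab : a ≠ b) :
    ((if a < b then (1 : ℝ) else 0) - δ ^ a / (δ ^ a + δ ^ b)) ^ 2 ≤ δ ^ 2 := by
  rcases hab.lt_or_gt with h | h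
  · rw [if_pos h, one_sub_div (by positivity), add_sub_cancel_left]
    exact pow_le_pow_left₀ (by positivity) (pow_div_pow_add_pow_le hδ0 hδ1 h) 2
  · rw [if_neg h.not_gt, zero_sub, neg_sq, add_comm]
    exact pow_le_pow_left₀ (by positivity) (pow_div_pow_add_pow_le hδ0 hδ1 h) 2

lemma sum_offDiag_sq_ite_lt_sub_pow_div_le {ι : Type*} [Fintype ι] [DecidableEq ι]
    {r : ι → ℕ} (hr : Function.Injective r) {δ : ℝ} (hδ0 : 0 < δ) (hδ1 : δ ≤ 1) :
    ∑ i, ∑ j ∈ univ \ {i},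
        ((if r i < r j then (1 : ℝ) else 0) - δ ^ r i / (δ ^ r i + δ ^ r j)) ^ 2 ≤
      (Fintype.card ι : ℝ) ^ 2 * δ ^ 2 :=
  calc _ ≤ ∑ _i : ι, ∑ _j ∈ univ \ {_i}, δ ^ 2 := by
        refine sum_le_sum fun i _ => sum_le_sum fun j hj => sq_ite_lt_sub_pow_div_le hδ0 hδ1 ?_
        exact hr.ne (by simpa [eq_comm] using hj)
    _ ≤ ∑ _i : ι, ∑ _j : ι, δ ^ 2 :=
        sum_le_sum fun _ _ => sum_le_sum_of_subset_of_nonneg sdiff_subset fun _ _ _ => by positivity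
    _ = (Fintype.card ι : ℝ) ^ 2 * δ ^ 2 := by simp only [sum_const, card_univ, nsmul_eq_mul]; ring

lemma exists_pos_le_one_mul_sq_lt (c : ℝ) {ε : ℝ} (hε : 0 < ε) :
    ∃ δ : ℝ, 0 < δ ∧ δ ≤ 1 ∧ c * δ ^ 2 < ε := by
  have hlim : Tendsto (fun δ : ℝ => c * δ ^ 2) (𝓝 0) (𝓝 0) := by
    simpa using ((continuous_pow 2).const_mul c).tendsto (0 : ℝ)
  have h : ∀ᶠ δ in 𝓝[>] (0 : ℝ), 0 < δ ∧ δ ≤ 1 ∧ c * δ ^ 2 < ε := by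
    filter_upwards [self_mem_nhdsWithin, nhdsWithin_le_nhds (eventually_le_nhds one_pos),
      nhdsWithin_le_nhds (hlim.eventually (gt_mem_nhds hε))] with δ h0 h1 h2 using ⟨h0, h1, h2⟩
  exact h.exists

/-- **Lemma 1 (almost-tournaments).** For any ranking `σ` of `Fin n` (`n ≥ 1`) and any
`ε > 0` there is a positive probability vector `p` on `Fin n` whose pairwise opinions
`p i / (p i + p j)` are within squared Euclidean distance `ε` of the ranking indicators
of `σ`, summed over all ordered pairs of distinct elements. -/
theorem ranking_approx_by_expert (n : ℕ) (hn : 1 ≤ n) (σ : Equiv.Perm (Fin n))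
    (ε : ℝ) (hε : 0 < ε) :
    ∃ p : Fin n → ℝ, (∀ i, 0 < p i) ∧ (∑ i, p i = 1) ∧
      ∑ i : Fin n, ∑ j ∈ Finset.univ \ {i},
        ((if σ⁻¹ i < σ⁻¹ j then (1 : ℝ) else 0) - p i / (p i + p j)) ^ 2 < ε := by
  obtain ⟨δ, hδ0, hδ1, hδε⟩ := exists_pos_le_one_mul_sq_lt ((n : ℝ) ^ 2) hε
  set r : Fin n → ℕ := fun i => σ⁻¹ i
  have hr : Function.Injective r := Fin.val_injective.comp σ⁻¹.injective
  set S := ∑ k, δ ^ r k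
  have hS : 0 < S := sum_pos (fun k _ => by positivity) ⟨⟨0, hn⟩, mem_univ _⟩
  refine ⟨fun i => δ ^ r i / S, fun i => by positivity, by rw [← sum_div, div_self hS.ne'], ?_⟩
  calc _ = ∑ i, ∑ j ∈ univ \ {i},
        ((if r i < r j then (1 : ℝ) else 0) - δ ^ r i / (δ ^ r i + δ ^ r j)) ^ 2 := by
        simp only [← add_div, div_div_div_cancel_right₀ hS.ne', Fin.lt_def, r]
    _ ≤ (n : ℝ) ^ 2 * δ ^ 2 := by
        simpa using sum_offDiag_sq_ite_lt_sub_pow_div_le hr hδ0 hδ1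
    _ < ε := hδε
end

section
/- Let n ≥ 1, let σ be a permutation of Fin n, let t > 1 be a real number, set z = Σ_{i=0}^{n−1} t^{−(i+1)}, and define p : Fin n → ℝ by p(σ(i)) = t^{−(i+1)}/z. Then p is a positive probability vector on Fin n, and for all indices i < j in Fin n one has p(σ(i))/(p(σ(i)) + p(σ(j))) > 1 − 1/t (equivalently, p(σ(j))/(p(σ(i)) + p(σ(j))) < 1/t). -/
/-!
Normalizing the positive weights `t⁻¹, t⁻², …, t⁻ⁿ` gives a probability vector, and the pairwise
opinion `p i / (p i + p j)` only depends on the ratio of the two weights. Along the ranking each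
weight is at least `t` times any later one, and `t * b ≤ a` forces `b / (a + b) < 1 / t`.
-/

open Finset

theorem pos_and_sum_eq_one_of_apply_perm_eq_div_sum {ι : Type*} [Fintype ι] [Nonempty ι]
    {w p : ι → ℝ} (hw : ∀ i, 0 < w i) (σ : Equiv.Perm ι) (hp : ∀ i, p (σ i) = w i / ∑ j, w j) :
    (∀ i, 0 < p i) ∧ ∑ i, p i = 1 := by
  have hsum : 0 < ∑ j, w j := sum_pos (fun i _ => hw i) univ_nonempty
  refine ⟨fun i => ?_, ?_⟩
  · rw [← σ.apply_symm_apply i, hp]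
    exact div_pos (hw _) hsum
  · rw [← Equiv.sum_comp σ p, sum_congr rfl fun i _ => hp i, ← sum_div, div_self hsum.ne']

section OrderedField

variable {K : Type*} [Field K] [LinearOrder K] [IsStrictOrderedRing K]

theorem mul_inv_pow_succ_le_inv_pow_succ {t : K} (ht : 1 ≤ t) {i j : ℕ} (hij : i < j) :
    t * (t ^ (j + 1))⁻¹ ≤ (t ^ (i + 1))⁻¹ := by
  have ht0 : 0 < t := zero_lt_one.trans_le ht
  calc t * (t ^ (j + 1))⁻¹
    _ = (t ^ j)⁻¹ := by rw [pow_succ, mul_inv, mul_comm, inv_mul_cancel_right₀ ht0.ne']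
    _ ≤ (t ^ (i + 1))⁻¹ := inv_anti₀ (pow_pos ht0 _) (pow_le_pow_right₀ ht hij)

theorem div_add_lt_one_div_of_mul_le {a b t : K} (hb : 0 < b) (ht : 0 < t) (h : t * b ≤ a) :
    b / (a + b) < 1 / t := by
  rw [div_lt_div_iff₀ (by nlinarith) ht]
  linarith

theorem one_sub_one_div_lt_div_add_of_mul_le {a b t : K} (hb : 0 < b) (ht : 0 < t)
    (h : t * b ≤ a) : 1 - 1 / t < a / (a + b) := by
  have hab : a + b ≠ 0 := by nlinarith
  have hsplit : a / (a + b) = 1 - b / (a + b) := by field_simp; ring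
  linarith [div_add_lt_one_div_of_mul_le hb ht h]

end OrderedField

/-- **Geometric construction in the proof of Lemma 1.** For a ranking `σ` of `Fin n`
(`n ≥ 1`) and `t > 1`, let `z = ∑_{i=0}^{n-1} t^{-(i+1)}` and set
`p (σ i) = t^{-(i+1)} / z`. Then `p` is a positive probability vector, and for all
`i < j` the pairwise opinion `p (σ i) / (p (σ i) + p (σ j))` exceeds `1 - 1/t`
(equivalently, `p (σ j) / (p (σ i) + p (σ j)) < 1/t`). -/
theorem geometric_probabilities_follow_ranking (n : ℕ) (hn : 1 ≤ n)
    (σ : Equiv.Perm (Fin n)) (t : ℝ) (ht : 1 < t)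
    (z : ℝ) (hz : z = ∑ i : Fin n, (t ^ ((i : ℕ) + 1))⁻¹)
    (p : Fin n → ℝ) (hp : ∀ i : Fin n, p (σ i) = (t ^ ((i : ℕ) + 1))⁻¹ / z) :
    ((∀ i, 0 < p i) ∧ (∑ i, p i = 1)) ∧
    ∀ i j : Fin n, i < j →
      p (σ i) / (p (σ i) + p (σ j)) > 1 - 1 / t ∧
      p (σ j) / (p (σ i) + p (σ j)) < 1 / t := by
  have ht0 : 0 < t := zero_lt_one.trans ht
  have : Nonempty (Fin n) := ⟨⟨0, hn⟩⟩
  set w : Fin n → ℝ := fun i => (t ^ ((i : ℕ) + 1))⁻¹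
  have hw : ∀ i, 0 < w i := fun i => inv_pos.mpr (pow_pos ht0 _)
  have hz0 : 0 < z := hz ▸ sum_pos (fun i _ => hw i) univ_nonempty
  refine ⟨pos_and_sum_eq_one_of_apply_perm_eq_div_sum hw σ (hz ▸ hp), fun i j hij => ?_⟩
  have hopinion : ∀ k l, p (σ k) / (p (σ k) + p (σ l)) = w k / (w k + w l) := fun k l => by
    rw [hp, hp, ← add_div, div_div_div_cancel_right₀ hz0.ne']
  have hdecay : t * w j ≤ w i := mul_inv_pow_succ_le_inv_pow_succ ht.le hij
  rw [hopinion, add_comm (p (σ i)), hopinion, add_comm (w j)]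
  exact ⟨one_sub_one_div_lt_div_add_of_mul_le (hw j) ht0 hdecay,
    div_add_lt_one_div_of_mul_le (hw j) ht0 hdecay⟩
end

section
/- Let ℓ, m be positive integers, let ε > 0, and let v, ṽ : Fin m → ℝ^ℓ be families of points with ‖v(i) − ṽ(i)‖ < ε for every i. If x ∈ ℝ^ℓ is such that the closed ball of radius ε centered at x is contained in the convex hull of {v(1), …, v(m)}, then x lies in the convex hull of {ṽ(1), …, ṽ(m)}. -/
/-!
Suppose `x` is not in the convex hull `K` of the `ṽ i`, and separate it from `K` by a functional
`f`: `f < c` on `K` and `c < f x`. Each `v i` lies within `ε` of `K`, hence so does the whole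
convex hull of the `v`, which is therefore contained in `{f < c + ε ‖f‖}`. But `f` exceeds
`f x + ε ‖f‖ - (f x - c) = c + ε ‖f‖` somewhere on the closed ball of radius `ε` around `x`.
-/

open Metric Set
open scoped Pointwise

variable {E : Type*} [NormedAddCommGroup E] [NormedSpace ℝ E]

theorem ContinuousLinearMap.exists_mem_closedBall_zero_lt_apply (f : E →L[ℝ] ℝ) {ε r : ℝ}
    (hε : 0 ≤ ε) (hr : r < ε * ‖f‖) : ∃ u ∈ closedBall (0 : E) ε, r < f u := by
  rcases lt_or_ge r 0 with hr₀ | hr₀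
  · exact ⟨0, mem_closedBall_self hε, by simpa using hr₀⟩
  have hεpos : 0 < ε := hε.lt_of_ne <| by rintro rfl; rw [zero_mul] at hr; linarith
  obtain ⟨y, hy₁, hy⟩ := f.exists_lt_apply_of_lt_opNorm (r := r / ε) (by rwa [div_lt_iff₀' hεpos])
  obtain ⟨z, hz₁, hz⟩ : ∃ z : E, ‖z‖ < 1 ∧ r / ε < f z := by
    rcases lt_abs.mp hy with h | h
    exacts [⟨y, hy₁, h⟩, ⟨-y, by rwa [norm_neg], by rwa [map_neg]⟩]
  refine ⟨ε • z, ?_, ?_⟩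
  · rw [mem_closedBall_zero_iff, norm_smul, Real.norm_of_nonneg hε]
    exact mul_le_of_le_one_right hε hz₁.le
  · rwa [map_smul, smul_eq_mul, ← div_lt_iff₀' hεpos]

theorem Convex.mem_of_closedBall_subset_add_closedBall {K : Set E} (hconv : Convex ℝ K)
    (hclosed : IsClosed K) {x : E} {ε : ℝ} (hε : 0 ≤ ε)
    (hsub : closedBall x ε ⊆ K + closedBall 0 ε) : x ∈ K := by
  by_contra hxK
  obtain ⟨f, c, hfK, hcx⟩ := geometric_hahn_banach_closed_point hconv hclosed hxK
  obtain ⟨u, hu, hfu⟩ :=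
    f.exists_mem_closedBall_zero_lt_apply hε (r := c - f x + ε * ‖f‖) (by linarith)
  obtain ⟨k, hk, b, hb, hkb⟩ := hsub (a := x + u) (by simpa [dist_eq_norm] using hu)
  have hfb : f b ≤ ε * ‖f‖ := calc
    f b ≤ ‖f b‖ := Real.le_norm_self _
    _ ≤ ‖f‖ * ε := f.le_opNorm_of_le (mem_closedBall_zero_iff.mp hb)
    _ = ε * ‖f‖ := mul_comm _ _
  have hfkb : f k + f b = f x + f u := by
    rw [← map_add, ← map_add]; exact congrArg f hkb
  linarith [hfK k hk]

theorem convexHull_range_subset_add_closedBall {ι : Type*} {v w : ι → E} {ε : ℝ}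
    (h : ∀ i, ‖v i - w i‖ ≤ ε) :
    convexHull ℝ (range v) ⊆ convexHull ℝ (range w) + closedBall 0 ε := by
  rw [← (convex_closedBall (0 : E) ε).convexHull_eq, ← convexHull_add]
  refine convexHull_mono ?_
  rintro _ ⟨i, rfl⟩
  exact ⟨w i, mem_range_self i, v i - w i, mem_closedBall_zero_iff.mpr (h i), add_sub_cancel _ _⟩

theorem mem_convexHull_of_perturbed_vertices_general (ℓ m : ℕ)
    (ε : ℝ) (hε : 0 < ε)
    (v vt : Fin m → EuclideanSpace ℝ (Fin ℓ))
    (hperturb : ∀ i, ‖v i - vt i‖ < ε)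
    (x : EuclideanSpace ℝ (Fin ℓ))
    (hx : Metric.closedBall x ε ⊆ convexHull ℝ (Set.range v)) :
    x ∈ convexHull ℝ (Set.range vt) :=
  Convex.mem_of_closedBall_subset_add_closedBall (convex_convexHull ℝ _)
    ((finite_range vt).isCompact_convexHull (𝕜 := ℝ)).isClosed hε.le
    (hx.trans (convexHull_range_subset_add_closedBall fun i => (hperturb i).le))

/-- **Lemma 8 (convex_analysis).** Let `ε > 0` and let `v i`, `ṽ i` (`i ∈ Fin m`) be points
of `ℝ^ℓ` with `‖v i - ṽ i‖ < ε` for every `i`. If the closed ball of radius `ε` around `x`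
is contained in the convex hull of the `v i`, then `x` lies in the convex hull of the `ṽ i`. -/
theorem mem_convexHull_of_perturbed_vertices (ℓ m : ℕ) (hℓ : 0 < ℓ) (hm : 0 < m)
    (ε : ℝ) (hε : 0 < ε)
    (v vt : Fin m → EuclideanSpace ℝ (Fin ℓ))
    (hperturb : ∀ i, ‖v i - vt i‖ < ε)
    (x : EuclideanSpace ℝ (Fin ℓ))
    (hx : Metric.closedBall x ε ⊆ convexHull ℝ (Set.range v)) :
    x ∈ convexHull ℝ (Set.range vt) :=
  mem_convexHull_of_perturbed_vertices_general ℓ m ε hε v vt hperturb x hx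
end

section
/- Let n ≥ 2, let p be a positive probability vector on Fin n, and let i ≠ j be elements of Fin n. Then p(i)/(p(i)+p(j)) = p(i)·1 + p(j)·0 + (Σ_{k ≠ i, k ≠ j} p(k)) · p(i)/(p(i)+p(j)). Consequently, the situational expert graph with edge weights f_p decomposes as the convex combination Σ_{a} p(a) · G[a] of its prefix expert graphs, where the prefix expert graph G[a] assigns weight 1 to every edge (a, b) with b ≠ a, weight 0 to every edge (b, a) with b ≠ a, and weight f_p(b, c) to every edge (b, c) with b, c ≠ a. -/
/-- **Lemma 3 (prefix decomposition of a situational expert graph).** For a positive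
probability vector `p` on `Fin n` (`n ≥ 2`) and distinct `i ≠ j`, the pairwise opinion
satisfies the identity
`p i / (p i + p j) = p i * 1 + p j * 0 + (∑_{k ≠ i,j} p k) * (p i / (p i + p j))`;
consequently the situational expert graph decomposes into prefix expert graphs
`G[a]` (with weight 1 on edges out of `a`, 0 on edges into `a`, and the original weights
elsewhere), as the convex combination `∑_a p a • G[a]`. -/
theorem situational_expert_graph_prefix_decomposition (n : ℕ) (hn : 2 ≤ n)
    (p : Fin n → ℝ) (hp : ∀ i, 0 < p i) (hsum : ∑ i, p i = 1)
    (i j : Fin n) (hij : i ≠ j) :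
    (p i / (p i + p j) =
      p i * 1 + p j * 0 + (∑ k ∈ Finset.univ \ {i, j}, p k) * (p i / (p i + p j))) ∧
    (∀ b c : Fin n, b ≠ c →
      p b / (p b + p c) =
        ∑ a : Fin n, p a *
          (if a = b then 1 else if a = c then 0 else p b / (p b + p c))) := by
  have key : ∀ b c : Fin n, b ≠ c →
      p b / (p b + p c) =
        p b * 1 + p c * 0 + (∑ k ∈ Finset.univ \ {b, c}, p k) * (p b / (p b + p c)) := by
    intro b c hbc
    have hrest : ∑ k ∈ Finset.univ \ {b, c}, p k = 1 - (p b + p c) := by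
      have h := Finset.sum_sdiff (Finset.subset_univ ({b, c} : Finset (Fin n))) (f := p)
      rw [hsum] at h
      have hpair : ∑ k ∈ ({b, c} : Finset (Fin n)), p k = p b + p c :=
        Finset.sum_pair hbc
      linarith [h, hpair]
    have hpos : p b + p c ≠ 0 := ne_of_gt (by linarith [hp b, hp c])
    rw [hrest]
    field_simp
    ring
  refine ⟨key i j hij, fun b c hbc => ?_⟩
  have hsplit := (Finset.sum_sdiff (Finset.subset_univ ({b, c} : Finset (Fin n)))
    (f := fun a => p a * (if a = b then 1 else if a = c then 0 else p b / (p b + p c)))).symm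
  rw [hsplit]
  have hpair : ∑ a ∈ ({b, c} : Finset (Fin n)),
      p a * (if a = b then 1 else if a = c then 0 else p b / (p b + p c))
      = p b * 1 + p c * 0 := by
    rw [Finset.sum_pair hbc]
    simp [hbc.symm]
  have hrest : ∑ a ∈ Finset.univ \ {b, c},
      p a * (if a = b then 1 else if a = c then 0 else p b / (p b + p c))
      = (∑ k ∈ Finset.univ \ {b, c}, p k) * (p b / (p b + p c)) := by
    rw [Finset.sum_mul]
    refine Finset.sum_congr rfl fun a ha => ?_
    simp only [Finset.mem_sdiff, Finset.mem_insert, Finset.mem_singleton] at ha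
    have h1 : a ≠ b := fun h => ha.2 (Or.inl h)
    have h2 : a ≠ c := fun h => ha.2 (Or.inr h)
    simp [h1, h2]
  rw [hpair, hrest]
  linarith [key b c hbc]
end

section
/- Let n ≥ 2. In the Euclidean space of real-valued functions on the set of pairs (i, j) with i < j in Fin n, let v_σ denote the vector associated to a permutation σ of Fin n by (v_σ)_{ij} = 1 if σ⁻¹(i) < σ⁻¹(j) and 0 otherwise, and let v_p denote the vector associated to a positive probability vector p on Fin n by (v_p)_{ij} = p(i)/(p(i)+p(j)). Then the convex hull of {v_σ : σ a permutation of Fin n} is contained in the closure of the convex hull of {v_p : p a positive probability vector on Fin n}. -/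
/-!
Ranking the alternatives by `σ`, take the expert weights `p i ∝ t ^ σ⁻¹ i`. As `t → 0⁺` the
pairwise ratio `p i / (p i + p j) = t ^ σ⁻¹ i / (t ^ σ⁻¹ i + t ^ σ⁻¹ j)` tends to `1` when
`σ⁻¹ i < σ⁻¹ j` and to `0` otherwise, so every ranking vector is a limit of expert vectors.
The closure of a convex hull is convex, hence it also contains the convex hull of the rankings.
-/

open Filter Topology Function

lemma tendsto_pow_div_pow_add_pow_of_lt {a b : ℕ} (hab : a < b) :
    Tendsto (fun t : ℝ => t ^ a / (t ^ a + t ^ b)) (𝓝[>] 0) (𝓝 1) := by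
  have hsimp : (fun t : ℝ => 1 / (1 + t ^ (b - a))) =ᶠ[𝓝[>] 0]
      fun t => t ^ a / (t ^ a + t ^ b) := by
    filter_upwards [self_mem_nhdsWithin] with t (ht : 0 < t)
    rw [show t ^ b = t ^ a * t ^ (b - a) by rw [← pow_add, Nat.add_sub_cancel' hab.le]]
    field_simp
  have hcont : ContinuousAt (fun t : ℝ => 1 / (1 + t ^ (b - a))) 0 :=
    continuousAt_const.div (by fun_prop) (by simp [Nat.sub_ne_zero_of_lt hab])
  simpa [Nat.sub_ne_zero_of_lt hab] using
    (hcont.tendsto.mono_left nhdsWithin_le_nhds).congr' hsimp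

lemma tendsto_pow_div_pow_add_pow {a b : ℕ} (hab : a ≠ b) :
    Tendsto (fun t : ℝ => t ^ a / (t ^ a + t ^ b)) (𝓝[>] 0)
      (𝓝 (if a < b then 1 else 0)) := by
  rcases hab.lt_or_gt with hlt | hgt
  · simpa [hlt] using tendsto_pow_div_pow_add_pow_of_lt hlt
  · have hcompl : (fun t : ℝ => 1 - t ^ b / (t ^ b + t ^ a)) =ᶠ[𝓝[>] 0]
        fun t => t ^ a / (t ^ a + t ^ b) := by
      filter_upwards [self_mem_nhdsWithin] with t (ht : 0 < t)
      field_simp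
      ring
    simpa [hgt.not_gt] using
      ((tendsto_pow_div_pow_add_pow_of_lt hgt).const_sub 1).congr' hcompl

lemma exists_pos_sum_eq_one_div_add_eq {ι : Type*} [Fintype ι] [Nonempty ι] {w : ι → ℝ}
    (hw : ∀ i, 0 < w i) :
    ∃ p : ι → ℝ, (∀ i, 0 < p i) ∧ ∑ i, p i = 1 ∧
      ∀ i j, p i / (p i + p j) = w i / (w i + w j) := by
  have hsum : 0 < ∑ i, w i := Finset.sum_pos (fun i _ => hw i) Finset.univ_nonempty
  refine ⟨fun i => w i / ∑ k, w k, fun i => div_pos (hw i) hsum, ?_, fun i j => ?_⟩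
  · rw [← Finset.sum_div, div_self hsum.ne']
  · have := hw i
    have := hw j
    field_simp

section RankingVectors

variable {ι : Type*} [Preorder ι]

lemma tendsto_toLp_pow_div_pow_add_pow {r : ι → ℕ} (hr : Injective r) :
    Tendsto (fun t : ℝ => WithLp.toLp 2 fun q : {q : ι × ι // q.1 < q.2} =>
        t ^ r q.1.1 / (t ^ r q.1.1 + t ^ r q.1.2)) (𝓝[>] 0)
      (𝓝 (WithLp.toLp 2 fun q : {q : ι × ι // q.1 < q.2} =>
        if r q.1.1 < r q.1.2 then 1 else 0)) :=
  ((PiLp.continuous_toLp 2 _).tendsto _).comp <| tendsto_pi_nhds.2 fun q =>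
    tendsto_pow_div_pow_add_pow (hr.ne q.2.ne)

lemma ranking_mem_closure_pair_ratios [Fintype ι] [Nonempty ι] {r : ι → ℕ} (hr : Injective r)
    {v : EuclideanSpace ℝ {q : ι × ι // q.1 < q.2}}
    (hv : ∀ q, v q = if r q.1.1 < r q.1.2 then 1 else 0) :
    v ∈ closure {u : EuclideanSpace ℝ {q : ι × ι // q.1 < q.2} |
      ∃ p : ι → ℝ, (∀ i, 0 < p i) ∧ (∑ i, p i = 1) ∧
        ∀ q : {q : ι × ι // q.1 < q.2}, u q = p q.1.1 / (p q.1.1 + p q.1.2)} := by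
  have hv' : v = WithLp.toLp 2 fun q => if r q.1.1 < r q.1.2 then 1 else 0 := by
    ext q
    exact hv q
  rw [hv']
  refine mem_closure_of_tendsto (tendsto_toLp_pow_div_pow_add_pow hr) ?_
  filter_upwards [self_mem_nhdsWithin] with t (ht : 0 < t)
  obtain ⟨p, hp, hsum, hratio⟩ := exists_pos_sum_eq_one_div_add_eq fun i => pow_pos ht (r i)
  exact ⟨p, hp, hsum, fun q => (hratio q.1.1 q.1.2).symm⟩

end RankingVectors

/-- **Lemma 6 (`Co(H_R) ⊆ G`).** In the Euclidean space of real functions on the pairs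
`(i, j)` with `i < j` in `Fin n` (`n ≥ 2`), the convex hull of the ranking vectors
`v_σ (i,j) = [σ⁻¹ i < σ⁻¹ j]` is contained in the closure of the convex hull of the
expert-opinion vectors `v_p (i,j) = p i / (p i + p j)` over positive probability
vectors `p`. -/
theorem linear_ordering_polytope_subset_closure_expert_vectors (n : ℕ) (hn : 2 ≤ n) :
    convexHull ℝ
      {v : EuclideanSpace ℝ {q : Fin n × Fin n // q.1 < q.2} |
        ∃ σ : Equiv.Perm (Fin n),
          ∀ q : {q : Fin n × Fin n // q.1 < q.2},
            v q = if σ⁻¹ q.1.1 < σ⁻¹ q.1.2 then (1 : ℝ) else 0} ⊆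
    closure (convexHull ℝ
      {v : EuclideanSpace ℝ {q : Fin n × Fin n // q.1 < q.2} |
        ∃ p : Fin n → ℝ, (∀ i, 0 < p i) ∧ (∑ i, p i = 1) ∧
          ∀ q : {q : Fin n × Fin n // q.1 < q.2},
            v q = p q.1.1 / (p q.1.1 + p q.1.2)}) := by
  have : Nonempty (Fin n) := ⟨⟨0, by omega⟩⟩
  refine convexHull_min ?_ (convex_convexHull ℝ _).closure
  rintro v ⟨σ, hv⟩
  refine closure_mono (subset_convexHull ℝ _) (ranking_mem_closure_pair_ratios
    (r := fun i => (σ⁻¹ i : ℕ)) (Fin.val_injective.comp σ⁻¹.injective) fun q => ?_)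
  simp only [hv q, Fin.lt_def]
end

section
/- Let n ≥ 2, let w be a function from the permutations of Fin n to ℝ with w(σ) ≥ 0 for all σ and Σ_σ w(σ) = 1, and define f_w(i,j) = Σ_σ w(σ) · [σ⁻¹(i) < σ⁻¹(j)] for i ≠ j. Then for every k ≥ 2 and every injective y : Fin k → Fin n: Σ_{i=0}^{k−1} f_w(y(i), y(i+1 mod k)) ≤ k − 1. -/
/-- **Curl condition for linear ordering graphs.** If `w` is a probability distribution on
rankings of `Fin n` (`n ≥ 2`) and `f_w (i, j) = ∑_σ w σ · [σ⁻¹ i < σ⁻¹ j]`, then along any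
cycle of `k ≥ 2` distinct vertices the edge weights sum to at most `k - 1`.
(`finRotate k i = i + 1 (mod k)`.) -/
theorem LOG_curl_condition (n : ℕ) (hn : 2 ≤ n)
    (w : Equiv.Perm (Fin n) → ℝ) (hw : ∀ σ, 0 ≤ w σ) (hwsum : ∑ σ, w σ = 1)
    (k : ℕ) (hk : 2 ≤ k) (y : Fin k → Fin n) (hy : Function.Injective y) :
    ∑ i : Fin k,
        (∑ σ : Equiv.Perm (Fin n),
          w σ * (if σ⁻¹ (y i) < σ⁻¹ (y (finRotate k i)) then (1 : ℝ) else 0))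
      ≤ (k : ℝ) - 1 := by
  rw [Finset.sum_comm]
  have key : ∀ σ : Equiv.Perm (Fin n),
      (∑ i : Fin k, (if σ⁻¹ (y i) < σ⁻¹ (y (finRotate k i)) then (1 : ℝ) else 0))
        ≤ (k : ℝ) - 1 := by
    intro σ
    -- there is an i where the indicator is 0: take i maximizing σ⁻¹ (y i)
    have hne : (Finset.univ : Finset (Fin k)).Nonempty := by
      refine ⟨⟨0, by omega⟩, Finset.mem_univ _⟩
    obtain ⟨i₀, -, hmax⟩ := Finset.exists_max_image Finset.univ
      (fun i => σ⁻¹ (y i)) hne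
    have hnot : ¬ σ⁻¹ (y i₀) < σ⁻¹ (y (finRotate k i₀)) :=
      not_lt.mpr (hmax _ (Finset.mem_univ _))
    rw [← Finset.sum_erase_add _ _ (Finset.mem_univ i₀), if_neg hnot, add_zero]
    have : (∑ i ∈ Finset.univ.erase i₀,
        (if σ⁻¹ (y i) < σ⁻¹ (y (finRotate k i)) then (1 : ℝ) else 0))
        ≤ ∑ i ∈ Finset.univ.erase i₀, (1 : ℝ) := by
      refine Finset.sum_le_sum fun i _ => ?_
      split <;> norm_num
    refine this.trans ?_
    rw [Finset.sum_const, Finset.card_erase_of_mem (Finset.mem_univ _),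
      Finset.card_univ, Fintype.card_fin]
    simp only [nsmul_eq_mul, mul_one]
    rw [Nat.cast_sub (by omega)]
    norm_num
  calc ∑ σ : Equiv.Perm (Fin n), ∑ i : Fin k,
        w σ * (if σ⁻¹ (y i) < σ⁻¹ (y (finRotate k i)) then (1 : ℝ) else 0)
      ≤ ∑ σ : Equiv.Perm (Fin n), w σ * ((k : ℝ) - 1) := by
        refine Finset.sum_le_sum fun σ _ => ?_
        rw [← Finset.mul_sum]
        exact mul_le_mul_of_nonneg_left (key σ) (hw σ)
    _ = (k : ℝ) - 1 := by rw [← Finset.sum_mul, hwsum, one_mul]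
end

section
/- Let n ≥ 3, let U be a nonempty finite type, let d : U → ℝ be a probability distribution (d(u) ≥ 0 for all u and Σ_u d(u) = 1), let p_u be a positive probability vector on Fin n for each u ∈ U, and define f_d(i,j) = Σ_{u ∈ U} d(u) · p_u(i)/(p_u(i)+p_u(j)) for i ≠ j. Then for every k ≥ 3 and every injective y : Fin k → Fin n: Σ_{i=0}^{k−1} f_d(y(i), y(i+1 mod k)) < k − 1 (strict inequality). -/
/-!
For a single state with positive weights `x` along a cycle `σ` of length `k ≥ 3`, the terms
`x i / (x i + x (σ i))` and `x (σ i) / (x i + x (σ i))` add up to `1`, so the cycle sum is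
`k` minus the sum of the second terms. Each pair sum `x i + x (σ i)` misses some third vertex,
hence is strictly smaller than the total `T = ∑ x`; therefore the second sum strictly exceeds
`∑ x (σ i) / T = 1`. The expert graph is a convex combination of such single-state graphs, so
the strict bound `k - 1` survives the mixture.
-/

open Finset

theorem finRotate_mem_derangements {k : ℕ} (hk : 2 ≤ k) : finRotate k ∈ derangements (Fin k) :=
  fun i => Equiv.Perm.mem_support.mp (support_finRotate_of_le hk ▸ mem_univ i)

section

variable {𝕜 ι : Type*} [Field 𝕜] [LinearOrder 𝕜] [IsStrictOrderedRing 𝕜] [Fintype ι]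

theorem sum_mul_lt_of_forall_lt {w f : ι → 𝕜} {c : 𝕜} (hw : ∀ u, 0 ≤ w u)
    (hw₁ : ∑ u, w u = 1) (hf : ∀ u, f u < c) : ∑ u, w u * f u < c := by
  obtain ⟨u₀, -, hu₀⟩ : ∃ u ∈ univ, (0 : ι → 𝕜) u < w u :=
    exists_lt_of_sum_lt (by simp [hw₁])
  calc ∑ u, w u * f u < ∑ u, w u * c :=
        sum_lt_sum (fun u _ => mul_le_mul_of_nonneg_left (hf u).le (hw u))
          ⟨u₀, mem_univ _, mul_lt_mul_of_pos_left (hf u₀) hu₀⟩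
    _ = c := by rw [← sum_mul, hw₁, one_mul]

variable {x : ι → 𝕜}

theorem add_lt_sum_of_three_le_card (hx : ∀ i, 0 < x i) (hι : 3 ≤ Fintype.card ι) {i j : ι}
    (hij : i ≠ j) : x i + x j < ∑ l, x l := by
  classical
  obtain ⟨l, -, hl⟩ : ∃ l ∈ univ, l ∉ ({i, j} : Finset ι) :=
    exists_mem_notMem_of_card_lt_card (card_le_two.trans_lt hι)
  rw [← sum_pair hij]
  exact sum_lt_sum_of_subset (subset_univ _) (mem_univ l) hl (hx l) fun m _ _ => (hx m).le

theorem one_lt_sum_div_add_apply (hx : ∀ i, 0 < x i) (hι : 3 ≤ Fintype.card ι)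
    {σ : Equiv.Perm ι} (hσ : σ ∈ derangements ι) :
    1 < ∑ i, x (σ i) / (x i + x (σ i)) := by
  have hpair_lt (i : ι) : x i + x (σ i) < ∑ l, x l :=
    add_lt_sum_of_three_le_card hx hι (hσ i).symm
  have : Nonempty ι := Fintype.card_pos_iff.mp (by omega)
  have hT : 0 < ∑ l, x l := sum_pos (fun i _ => hx i) univ_nonempty
  calc (1 : 𝕜) = ∑ i, x (σ i) / ∑ l, x l := by
        rw [← sum_div, Equiv.sum_comp σ x, div_self hT.ne']
    _ < ∑ i, x (σ i) / (x i + x (σ i)) :=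
        sum_lt_sum_of_nonempty univ_nonempty fun i _ =>
          div_lt_div_of_pos_left (hx (σ i)) (add_pos (hx i) (hx (σ i))) (hpair_lt i)

theorem sum_div_add_apply_lt (hx : ∀ i, 0 < x i) (hι : 3 ≤ Fintype.card ι)
    {σ : Equiv.Perm ι} (hσ : σ ∈ derangements ι) :
    ∑ i, x i / (x i + x (σ i)) < Fintype.card ι - 1 := by
  have htotal : ∑ i, x i / (x i + x (σ i)) + ∑ i, x (σ i) / (x i + x (σ i)) = Fintype.card ι := by
    rw [← sum_add_distrib]
    simp [← add_div, div_self (add_pos (hx _) (hx _)).ne']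
  linarith [one_lt_sum_div_add_apply hx hι hσ]

end

theorem expert_graph_strict_curl_condition_general (n : ℕ)
    (U : Type) [Fintype U]
    (d : U → ℝ) (hd : ∀ u, 0 ≤ d u) (hdsum : ∑ u, d u = 1)
    (p : U → Fin n → ℝ) (hp : ∀ u i, 0 < p u i)
    (k : ℕ) (hk : 3 ≤ k) (y : Fin k → Fin n) :
    ∑ i : Fin k,
        (∑ u, d u * (p u (y i) / (p u (y i) + p u (y (finRotate k i)))))
      < (k : ℝ) - 1 := by
  have hcycle (u : U) :
      ∑ i : Fin k, p u (y i) / (p u (y i) + p u (y (finRotate k i))) < (k : ℝ) - 1 := by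
    simpa using sum_div_add_apply_lt (fun i => hp u (y i)) (by simpa using hk)
      (finRotate_mem_derangements (by omega))
  rw [sum_comm]
  simp_rw [← mul_sum]
  exact sum_mul_lt_of_forall_lt hd hdsum hcycle

/-- **Strict curl condition for expert graphs.** Let `f_d (i,j) = ∑_u d u · p u i / (p u i + p u j)`
be the edge-weight function of an expert graph on `Fin n` (`n ≥ 3`), a mixture over a
nonempty finite set of states of pairwise opinions of positive probability vectors.
Then along any cycle of `k ≥ 3` distinct vertices the aggregate opinions sum to strictly
less than `k - 1`. (`finRotate k i = i + 1 (mod k)`.) -/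
theorem expert_graph_strict_curl_condition (n : ℕ) (hn : 3 ≤ n)
    (U : Type) [Fintype U] [Nonempty U]
    (d : U → ℝ) (hd : ∀ u, 0 ≤ d u) (hdsum : ∑ u, d u = 1)
    (p : U → Fin n → ℝ) (hp : ∀ u i, 0 < p u i) (hpsum : ∀ u, ∑ i, p u i = 1)
    (k : ℕ) (hk : 3 ≤ k) (y : Fin k → Fin n) (hy : Function.Injective y) :
    ∑ i : Fin k,
        (∑ u, d u * (p u (y i) / (p u (y i) + p u (y (finRotate k i)))))
      < (k : ℝ) - 1 :=
  expert_graph_strict_curl_condition_general n U d hd hdsum p hp k hk y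
end
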